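/- arXiv:2401.09736 — 3 statements merged into one kernel-verified Lean document; each statement's English description precedes it below -/
import Mathlib

section
/- Let Q be a nonempty finite set, let E be a real normed vector space, let β > 0, and let F₁, F₂, F₃ : Q → E be three functions (the directional distance fields of three surfaces evaluated at the reference points). Assume that for every q ∈ Q and every pair (i,j) ∈ {(1,2),(2,3),(1,3)} the difference satisfies ‖Fᵢ(q) − Fⱼ(q)‖ < 1/β. Define the distance D(Fᵢ,Fⱼ) = Σ_{q ∈ Q} exp(−β·‖Fᵢ(q) − Fⱼ(q)‖) · ‖Fᵢ(q) − Fⱼ(q)‖. Then the triangle inequality holds: D(F₁,F₂) + D(F₂,F₃) ≥ D(F₁,F₃). -/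
lemma ddm_mono {β x y : ℝ} (hβ : 0 < β) (hx : 0 ≤ x) (hxy : x ≤ y)
    (hy : y < 1 / β) :
    Real.exp (-β * x) * x ≤ Real.exp (-β * y) * y := by
  have h1 : (-β * (y - x)) + 1 ≤ Real.exp (-β * (y - x)) := Real.add_one_le_exp _
  have h2 : Real.exp (-β * y) = Real.exp (-β * x) * Real.exp (-β * (y - x)) := by
    rw [← Real.exp_add]; ring_nf
  have h3 : 0 < Real.exp (-β * x) := Real.exp_pos _
  have hy' : β * y < 1 := by
    rw [lt_div_iff₀ hβ] at hy; linarith [mul_comm y β]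
  nlinarith [mul_le_mul_of_nonneg_left h1 (le_of_lt h3),
    mul_nonneg (mul_nonneg h3.le (sub_nonneg.mpr hxy)) (sub_nonneg.mpr hy'.le)]

lemma ddm_pointwise {β a b c : ℝ} (hβ : 0 < β) (ha : 0 ≤ a) (hb : 0 ≤ b)
    (hc : 0 ≤ c) (hab : c ≤ a + b) (ha' : a < 1 / β) (hb' : b < 1 / β)
    (hc' : c < 1 / β) :
    Real.exp (-β * c) * c ≤ Real.exp (-β * a) * a + Real.exp (-β * b) * b := by
  rcases le_or_gt c a with h | h
  · have := ddm_mono hβ hc h ha'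
    nlinarith [mul_nonneg (Real.exp_pos (-β * b)).le hb]
  rcases le_or_gt c b with h' | h'
  · have := ddm_mono hβ hc h' hb'
    nlinarith [mul_nonneg (Real.exp_pos (-β * a)).le ha]
  · have e1 : Real.exp (-β * c) ≤ Real.exp (-β * a) :=
      Real.exp_le_exp.mpr (by nlinarith)
    have e2 : Real.exp (-β * c) ≤ Real.exp (-β * b) :=
      Real.exp_le_exp.mpr (by nlinarith)
    nlinarith [Real.exp_pos (-β * c)]

theorem ddm_triangle_inequality
    {α : Type*} (Q : Finset α) (hQ : Q.Nonempty)
    {E : Type*} [NormedAddCommGroup E] [NormedSpace ℝ E]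
    (β : ℝ) (hβ : 0 < β)
    (F₁ F₂ F₃ : α → E)
    (h12 : ∀ q ∈ Q, ‖F₁ q - F₂ q‖ < 1 / β)
    (h23 : ∀ q ∈ Q, ‖F₂ q - F₃ q‖ < 1 / β)
    (h13 : ∀ q ∈ Q, ‖F₁ q - F₃ q‖ < 1 / β) :
    (∑ q ∈ Q, Real.exp (-β * ‖F₁ q - F₂ q‖) * ‖F₁ q - F₂ q‖) +
      (∑ q ∈ Q, Real.exp (-β * ‖F₂ q - F₃ q‖) * ‖F₂ q - F₃ q‖) ≥
      ∑ q ∈ Q, Real.exp (-β * ‖F₁ q - F₃ q‖) * ‖F₁ q - F₃ q‖ := by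
  rw [← Finset.sum_add_distrib]
  apply Finset.sum_le_sum
  intro q hq
  exact ddm_pointwise hβ (norm_nonneg _) (norm_nonneg _) (norm_nonneg _)
    (by simpa using norm_sub_le_norm_sub_add_norm_sub (F₁ q) (F₂ q) (F₃ q))
    (h12 q hq) (h23 q hq) (h13 q hq)
end

section
/- Let β > 0 and define z(x) = x·exp(−β·x) for x ≥ 0. If a, b, c are nonnegative real numbers satisfying the triangle inequality a + b ≥ c, and a, b, c are all strictly less than 1/β, then z(a) + z(b) ≥ z(c), i.e., a·exp(−β·a) + b·exp(−β·b) ≥ c·exp(−β·c). -/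
lemma z_mono (β : ℝ) (hβ : 0 < β) (x y : ℝ) (hx : 0 ≤ x) (hxy : x ≤ y)
    (hy : y ≤ 1 / β) : x * Real.exp (-β * x) ≤ y * Real.exp (-β * y) := by
  have hkey : β * (x - y) + 1 ≤ Real.exp (β * (x - y)) := Real.add_one_le_exp _
  have hmul : Real.exp (-β * y) = Real.exp (-β * x) * Real.exp (β * (x - y)) := by
    rw [← Real.exp_add]; ring_nf
  have hexpx : 0 < Real.exp (-β * x) := Real.exp_pos _
  have hy' : β * y ≤ 1 := by
    rw [le_div_iff₀ hβ] at hy; linarith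
  rw [hmul]
  have h1 : y * (Real.exp (-β * x) * Real.exp (β * (x - y)))
      ≥ y * (Real.exp (-β * x) * (1 + β * (x - y))) := by
    have hy0 : 0 ≤ y := le_trans hx hxy
    nlinarith [mul_nonneg hy0 hexpx.le]
  have h2 : y * (1 + β * (x - y)) ≥ x := by nlinarith
  nlinarith

theorem z_triangle_inequality
    (β : ℝ) (hβ : 0 < β)
    (a b c : ℝ) (ha : 0 ≤ a) (hb : 0 ≤ b) (hc : 0 ≤ c)
    (htri : a + b ≥ c)
    (ha' : a < 1 / β) (hb' : b < 1 / β) (hc' : c < 1 / β) :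
    a * Real.exp (-β * a) + b * Real.exp (-β * b) ≥ c * Real.exp (-β * c) := by
  rcases le_or_gt c a with h | h
  · have := z_mono β hβ c a hc h ha'.le
    nlinarith [mul_nonneg hb (Real.exp_pos (-β * b)).le]
  rcases le_or_gt c b with h2 | h2
  · have := z_mono β hβ c b hc h2 hb'.le
    nlinarith [mul_nonneg ha (Real.exp_pos (-β * a)).le]
  · have e1 : Real.exp (-β * c) ≤ Real.exp (-β * a) := by
      apply Real.exp_le_exp.mpr; nlinarith
    have e2 : Real.exp (-β * c) ≤ Real.exp (-β * b) := by
      apply Real.exp_le_exp.mpr; nlinarith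
    nlinarith [Real.exp_pos (-β * c)]
end

section
/- Let P₁ and P₂ be two nonempty finite sets of points in ℝ³ (two point clouds). Then the sum over the reference points Q = P₁ ∪ P₂ of the absolute difference of the unsigned distance functions equals the Chamfer Distance; that is, Σ_{q ∈ P₁ ∪ P₂} |dist(q, P₁) − dist(q, P₂)| = Σ_{p ∈ P₁} dist(p, P₂) + Σ_{p ∈ P₂} dist(p, P₁), where dist(q, P) denotes the distance from the point q to its nearest point in the finite set P (the metric infimum distance). -/
theorem ddm_eq_chamfer_distance
    [DecidableEq (EuclideanSpace ℝ (Fin 3))]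
    (P₁ P₂ : Finset (EuclideanSpace ℝ (Fin 3)))
    (h₁ : P₁.Nonempty) (h₂ : P₂.Nonempty) :
    ∑ q ∈ P₁ ∪ P₂,
        |Metric.infDist q (P₁ : Set (EuclideanSpace ℝ (Fin 3))) -
          Metric.infDist q (P₂ : Set (EuclideanSpace ℝ (Fin 3)))| =
      (∑ p ∈ P₁, Metric.infDist p (P₂ : Set (EuclideanSpace ℝ (Fin 3)))) +
        ∑ p ∈ P₂, Metric.infDist p (P₁ : Set (EuclideanSpace ℝ (Fin 3))) := by
  have hU : P₁ ∪ P₂ = P₁ ∪ (P₂ \ P₁) := by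
    rw [Finset.union_sdiff_self_eq_union]
  rw [hU, Finset.sum_union Finset.disjoint_sdiff]
  have h1 : ∀ q ∈ P₁,
      |Metric.infDist q (P₁ : Set (EuclideanSpace ℝ (Fin 3))) -
        Metric.infDist q (P₂ : Set (EuclideanSpace ℝ (Fin 3)))| =
      Metric.infDist q (P₂ : Set (EuclideanSpace ℝ (Fin 3))) := by
    intro q hq
    rw [Metric.infDist_zero_of_mem (by exact_mod_cast hq), zero_sub, abs_neg,
      abs_of_nonneg Metric.infDist_nonneg]
  have h2 : ∀ q ∈ P₂ \ P₁,
      |Metric.infDist q (P₁ : Set (EuclideanSpace ℝ (Fin 3))) -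
        Metric.infDist q (P₂ : Set (EuclideanSpace ℝ (Fin 3)))| =
      Metric.infDist q (P₁ : Set (EuclideanSpace ℝ (Fin 3))) := by
    intro q hq
    rw [Finset.mem_sdiff] at hq
    rw [Metric.infDist_zero_of_mem (show q ∈ (P₂ : Set (EuclideanSpace ℝ (Fin 3))) by exact_mod_cast hq.1), sub_zero,
      abs_of_nonneg Metric.infDist_nonneg]
  rw [Finset.sum_congr rfl h1, Finset.sum_congr rfl h2]
  congr 1
  apply Finset.sum_subset (Finset.sdiff_subset)
  intro x hx hx'
  have : x ∈ P₁ := by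
    by_contra h
    exact hx' (Finset.mem_sdiff.mpr ⟨hx, h⟩)
  exact Metric.infDist_zero_of_mem (by exact_mod_cast this)
end
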